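/- Fix integers m ≥ 2 and 1 ≤ t ≤ m−1. Let γ : I → ℝ^m be a smooth unit-speed curve in the flat pseudo-Euclidean space ℝ^m_t (⟪T,T⟫_t = ε₁ ∈ {−1,1}, T = γ′) which is a 2-Frenet curve: there exist a smooth positive function k : I → ℝ and a smooth field N along γ with ⟪N,N⟫_t = ε₂ ∈ {−1,1}, ⟪T,N⟫_t = 0, T′ = ε₂kN and N′ = −ε₁kT. Then γ is not triharmonic: γ^{(6)} does not vanish identically on I. In particular, there exists no proper triharmonic 2-Frenet curve in ℝ^m_t. -/

import Mathlib

open scoped BigOperators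

noncomputable section

def pform (t : ℕ) {n : ℕ} (x y : Fin n → ℝ) : ℝ :=
  ∑ i : Fin n, (if i.val < t then -(x i * y i) else x i * y i)

def cov (t : ℕ) {n : ℕ} (c : ℝ) (γ X : ℝ → Fin n → ℝ) : ℝ → Fin n → ℝ :=
  fun s => deriv X s - (c * pform t (deriv X s) (γ s)) • γ s

def curvOp (t : ℕ) {n : ℕ} (c : ℝ) (X Y Z : Fin n → ℝ) : Fin n → ℝ :=
  c • (pform t Y Z • X - pform t X Z • Y)

def tensionField (t : ℕ) {n : ℕ} (c : ℝ) (r : ℕ) (γ : ℝ → Fin n → ℝ) (s : ℝ) : Fin n → ℝ :=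
  (cov t c γ)^[2*r-1] (deriv γ) s
    + ∑ ℓ ∈ Finset.range (r-1), ((-1 : ℝ)^ℓ) •
        curvOp t c ((cov t c γ)^[2*r-3-ℓ] (deriv γ) s) ((cov t c γ)^[ℓ] (deriv γ) s) (deriv γ s)

lemma pform_add_left (t : ℕ) {n : ℕ} (x y z : Fin n → ℝ) :
    pform t (x + y) z = pform t x z + pform t y z := by
  unfold pform
  rw [← Finset.sum_add_distrib]
  refine Finset.sum_congr rfl fun i _ => ?_
  by_cases hi : i.val < t <;> simp [hi, Pi.add_apply] <;> ring

lemma pform_smul_left (t : ℕ) {n : ℕ} (a : ℝ) (x z : Fin n → ℝ) :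
    pform t (a • x) z = a * pform t x z := by
  unfold pform
  rw [Finset.mul_sum]
  refine Finset.sum_congr rfl fun i _ => ?_
  by_cases hi : i.val < t <;> simp [hi, Pi.smul_apply, smul_eq_mul] <;> ring

lemma pform_comm (t : ℕ) {n : ℕ} (x y : Fin n → ℝ) :
    pform t x y = pform t y x := by
  unfold pform
  refine Finset.sum_congr rfl fun i _ => ?_
  by_cases hi : i.val < t <;> simp [hi] <;> ring

lemma pform_zero_left (t : ℕ) {n : ℕ} (z : Fin n → ℝ) :
    pform t 0 z = 0 := by
  unfold pform
  refine Finset.sum_eq_zero fun i _ => ?_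
  by_cases hi : i.val < t <;> simp [hi]

lemma iterate_deriv_step {F : Type*} [NormedAddCommGroup F] [NormedSpace ℝ F]
    {I : Set ℝ} (hI : IsOpen I) {T X Y : ℝ → F} {n : ℕ}
    (hEq : Set.EqOn (deriv^[n] T) X I) (hXY : ∀ s ∈ I, HasDerivAt X (Y s) s) :
    Set.EqOn (deriv^[n+1] T) Y I := by
  intro s hs
  have h1 : deriv^[n+1] T s = deriv (deriv^[n] T) s := by
    rw [Function.iterate_succ_apply']
  have h2 : deriv (deriv^[n] T) s = deriv X s :=
    Filter.EventuallyEq.deriv_eq (Filter.eventuallyEq_of_mem (hI.mem_nhds hs) hEq)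
  rw [h1, h2, (hXY s hs).deriv]

lemma deriv_eq_zero_of_eqOn_zero {I : Set ℝ} (hI : IsOpen I) {f : ℝ → ℝ} {d s : ℝ}
    (hs : s ∈ I) (hf : HasDerivAt f d s) (h0 : ∀ x ∈ I, f x = 0) : d = 0 := by
  have h1 : f =ᶠ[nhds s] fun _ => (0:ℝ) :=
    Filter.eventuallyEq_of_mem (hI.mem_nhds hs) h0
  rw [← hf.deriv, h1.deriv_eq, deriv_const]

lemma const_of_hasDerivAt_zero {I : Set ℝ} (hconv : Convex ℝ I) {f : ℝ → ℝ}
    (hf : ∀ s ∈ I, HasDerivAt f 0 s) {x y : ℝ} (hx : x ∈ I) (hy : y ∈ I) : f x = f y := by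
  have h0 : ((1 : ℝ →L[ℝ] ℝ).smulRight (0:ℝ)) = 0 := by ext; simp
  have hb := hconv.norm_image_sub_le_of_norm_hasFDerivWithin_le
    (f' := fun _ => ((1 : ℝ →L[ℝ] ℝ).smulRight (0:ℝ)))
    (fun s hs => ((hf s hs).hasFDerivAt).hasFDerivWithinAt) (C := 0)
    (fun s _ => by rw [h0]; simp) hy hx
  have h2 : ‖f x - f y‖ ≤ 0 := by simpa using hb
  have h3 := norm_le_zero_iff.mp h2
  linarith [sub_eq_zero.mp h3]

lemma frenet_step {m : ℕ} {I : Set ℝ} {T N : ℝ → Fin m → ℝ}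
    {k a b a' b' c d : ℝ → ℝ} {ε₁ ε₂ : ℝ}
    (hTD : ∀ s ∈ I, HasDerivAt T ((ε₂ * k s) • N s) s)
    (hND : ∀ s ∈ I, HasDerivAt N ((-(ε₁ * k s)) • T s) s)
    (haD : ∀ s ∈ I, HasDerivAt a (a' s) s) (hbD : ∀ s ∈ I, HasDerivAt b (b' s) s)
    (hc : ∀ s, c s = a' s - ε₁ * k s * b s) (hd : ∀ s, d s = b' s + ε₂ * k s * a s) :
    ∀ s ∈ I, HasDerivAt (fun x => a x • T x + b x • N x) (c s • T s + d s • N s) s := by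
  intro s hs
  have h := ((haD s hs).smul (hTD s hs)).add ((hbD s hs).smul (hND s hs))
  refine h.congr_deriv (Eq.symm ?_)
  funext i
  simp only [Pi.add_apply, Pi.smul_apply, smul_eq_mul, hc, hd]
  ring

/-- No `2`-Frenet curve in the flat pseudo-Euclidean space `ℝ^m_t` is
triharmonic: its sixth derivative `γ⁽⁶⁾` does not vanish identically. -/
theorem stmt_5 (m t : ℕ) (hm : 2 ≤ m) (ht1 : 1 ≤ t) (ht2 : t ≤ m - 1)
    (I : Set ℝ) (hIopen : IsOpen I) (hIconn : I.OrdConnected) (hIne : I.Nonempty)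
    (γ N : ℝ → Fin m → ℝ) (k : ℝ → ℝ)
    (hγ : ContDiffOn ℝ (⊤ : ℕ∞) γ I) (hN : ContDiffOn ℝ (⊤ : ℕ∞) N I) (hk : ContDiffOn ℝ (⊤ : ℕ∞) k I)
    (hkpos : ∀ s ∈ I, 0 < k s)
    (ε₁ ε₂ : ℝ) (hε₁ : ε₁ = 1 ∨ ε₁ = -1) (hε₂ : ε₂ = 1 ∨ ε₂ = -1)
    (hunit : ∀ s ∈ I, pform t (deriv γ s) (deriv γ s) = ε₁)
    (hNN : ∀ s ∈ I, pform t (N s) (N s) = ε₂)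
    (hTN : ∀ s ∈ I, pform t (deriv γ s) (N s) = 0)
    (hFr1 : ∀ s ∈ I, deriv (deriv γ) s = (ε₂ * k s) • N s)
    (hFr2 : ∀ s ∈ I, deriv N s = (-(ε₁ * k s)) • deriv γ s) :
    ∃ s ∈ I, iteratedDeriv 6 γ s ≠ 0 := by
  by_contra hcon
  push_neg at hcon
  have hconv : Convex ℝ I := convex_iff_ordConnected.mpr hIconn
  obtain ⟨δ, hδdef⟩ : ∃ d : ℝ, d = ε₁ * ε₂ := ⟨_, rfl⟩
  have hδsq : δ * δ = 1 := by
    rw [hδdef]; rcases hε₁ with rfl | rfl <;> rcases hε₂ with rfl | rfl <;> norm_num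
  -- derivatives of k
  set K1 := deriv k with hK1def
  set K2 := deriv K1 with hK2def
  set K3 := deriv K2 with hK3def
  set K4 := deriv K3 with hK4def
  have hk1c : ContDiffOn ℝ (⊤ : ℕ∞) K1 I := hk.deriv_of_isOpen hIopen (by simp)
  have hk2c : ContDiffOn ℝ (⊤ : ℕ∞) K2 I := hk1c.deriv_of_isOpen hIopen (by simp)
  have hk3c : ContDiffOn ℝ (⊤ : ℕ∞) K3 I := hk2c.deriv_of_isOpen hIopen (by simp)
  have hkD : ∀ s ∈ I, HasDerivAt k (K1 s) s := fun s hs =>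
    ((hk.differentiableOn (by simp)).differentiableAt (hIopen.mem_nhds hs)).hasDerivAt
  have hk1D : ∀ s ∈ I, HasDerivAt K1 (K2 s) s := fun s hs =>
    ((hk1c.differentiableOn (by simp)).differentiableAt (hIopen.mem_nhds hs)).hasDerivAt
  have hk2D : ∀ s ∈ I, HasDerivAt K2 (K3 s) s := fun s hs =>
    ((hk2c.differentiableOn (by simp)).differentiableAt (hIopen.mem_nhds hs)).hasDerivAt
  have hk3D : ∀ s ∈ I, HasDerivAt K3 (K4 s) s := fun s hs =>
    ((hk3c.differentiableOn (by simp)).differentiableAt (hIopen.mem_nhds hs)).hasDerivAt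
  -- derivatives of T = deriv γ and N
  have hTc : ContDiffOn ℝ (⊤ : ℕ∞) (deriv γ) I := hγ.deriv_of_isOpen hIopen (by simp)
  have hTD : ∀ s ∈ I, HasDerivAt (deriv γ) ((ε₂ * k s) • N s) s := by
    intro s hs
    have h := ((hTc.differentiableOn (by simp)).differentiableAt
      (hIopen.mem_nhds hs)).hasDerivAt
    rwa [hFr1 s hs] at h
  have hND : ∀ s ∈ I, HasDerivAt N ((-(ε₁ * k s)) • deriv γ s) s := by
    intro s hs
    have h := ((hN.differentiableOn (by simp)).differentiableAt
      (hIopen.mem_nhds hs)).hasDerivAt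
    rwa [hFr2 s hs] at h

  -- coefficient derivative packs
  have ha2D : ∀ s ∈ I, HasDerivAt (fun x => -(ε₁*ε₂)*(k x)^2)
      (-(2*(ε₁*ε₂))*(k s*K1 s)) s := by
    intro s hs
    have h := ((hkD s hs).pow 2).const_mul (-(ε₁*ε₂))
    refine h.congr_deriv (Eq.symm ?_)
    push_cast [Pi.pow_apply]
    ring
  have hb2D : ∀ s ∈ I, HasDerivAt (fun x => ε₂*K1 x) (ε₂*K2 s) s := fun s hs =>
    (hk1D s hs).const_mul ε₂
  have ha3D : ∀ s ∈ I, HasDerivAt (fun x => -(3*(ε₁*ε₂))*(k x*K1 x))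
      (-(3*(ε₁*ε₂))*((K1 s)^2 + k s*K2 s)) s := by
    intro s hs
    have h := ((hkD s hs).mul (hk1D s hs)).const_mul (-(3*(ε₁*ε₂)))
    refine h.congr_deriv (Eq.symm ?_)
    ring
  have hb3D : ∀ s ∈ I, HasDerivAt (fun x => ε₂*K2 x - (ε₁*ε₂*ε₂)*(k x)^3)
      (ε₂*K3 s - (3*(ε₁*ε₂*ε₂))*((k s)^2*K1 s)) s := by
    intro s hs
    have h := ((hk2D s hs).const_mul ε₂).sub (((hkD s hs).pow 3).const_mul (ε₁*ε₂*ε₂))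
    refine h.congr_deriv (Eq.symm ?_)
    push_cast [Pi.pow_apply]
    ring
  have ha4D : ∀ s ∈ I, HasDerivAt
      (fun x => (ε₁*ε₁*ε₂*ε₂)*(k x)^4 - (ε₁*ε₂)*(3*(K1 x)^2 + 4*(k x*K2 x)))
      ((4*(ε₁*ε₁*ε₂*ε₂))*((k s)^3*K1 s) - (ε₁*ε₂)*(6*(K1 s*K2 s) + 4*(K1 s*K2 s + k s*K3 s))) s := by
    intro s hs
    have h := (((hkD s hs).pow 4).const_mul (ε₁*ε₁*ε₂*ε₂)).sub
      (((((hk1D s hs).pow 2).const_mul 3).add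
        (((hkD s hs).mul (hk2D s hs)).const_mul 4)).const_mul (ε₁*ε₂))
    refine h.congr_deriv (Eq.symm ?_)
    push_cast [Pi.pow_apply]
    ring
  have hb4D : ∀ s ∈ I, HasDerivAt
      (fun x => ε₂*K3 x - (6*(ε₁*ε₂*ε₂))*((k x)^2*K1 x))
      (ε₂*K4 s - (6*(ε₁*ε₂*ε₂))*(2*(k s*(K1 s)^2) + (k s)^2*K2 s)) s := by
    intro s hs
    have h := ((hk3D s hs).const_mul ε₂).sub
      ((((hkD s hs).pow 2).mul (hk1D s hs)).const_mul (6*(ε₁*ε₂*ε₂)))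
    refine h.congr_deriv (Eq.symm ?_)
    push_cast [Pi.pow_apply]
    ring
  -- the chain of derivatives of T
  have hE1D : ∀ s ∈ I, HasDerivAt (fun x => (0:ℝ) • deriv γ x + (ε₂*k x) • N x)
      ((-(ε₁*ε₂)*(k s)^2) • deriv γ s + (ε₂*K1 s) • N s) s :=
    frenet_step hTD hND (a' := fun _ => (0:ℝ)) (fun s _ => hasDerivAt_const s 0)
      (b' := fun s => ε₂*K1 s) (fun s hs => (hkD s hs).const_mul ε₂)
      (fun s => by ring) (fun s => by ring)
  have hE2D : ∀ s ∈ I, HasDerivAt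
      (fun x => (-(ε₁*ε₂)*(k x)^2) • deriv γ x + (ε₂*K1 x) • N x)
      ((-(3*(ε₁*ε₂))*(k s*K1 s)) • deriv γ s
        + (ε₂*K2 s - (ε₁*ε₂*ε₂)*(k s)^3) • N s) s :=
    frenet_step hTD hND ha2D hb2D (fun s => by ring) (fun s => by ring)
  have hE3D : ∀ s ∈ I, HasDerivAt
      (fun x => (-(3*(ε₁*ε₂))*(k x*K1 x)) • deriv γ x
        + (ε₂*K2 x - (ε₁*ε₂*ε₂)*(k x)^3) • N x)
      (((ε₁*ε₁*ε₂*ε₂)*(k s)^4 - (ε₁*ε₂)*(3*(K1 s)^2 + 4*(k s*K2 s))) • deriv γ s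
        + (ε₂*K3 s - (6*(ε₁*ε₂*ε₂))*((k s)^2*K1 s)) • N s) s :=
    frenet_step hTD hND ha3D hb3D (fun s => by ring) (fun s => by ring)
  have hE4D : ∀ s ∈ I, HasDerivAt
      (fun x => ((ε₁*ε₁*ε₂*ε₂)*(k x)^4 - (ε₁*ε₂)*(3*(K1 x)^2 + 4*(k x*K2 x))) • deriv γ x
        + (ε₂*K3 x - (6*(ε₁*ε₂*ε₂))*((k x)^2*K1 x)) • N x)
      (((10*(ε₁*ε₁*ε₂*ε₂))*((k s)^3*K1 s)
          - (ε₁*ε₂)*(10*(K1 s*K2 s) + 5*(k s*K3 s))) • deriv γ s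
        + (ε₂*K4 s + (ε₁*ε₁*ε₂*ε₂*ε₂)*(k s)^5
          - (ε₁*ε₂*ε₂)*(15*(k s*(K1 s)^2) + 10*((k s)^2*K2 s))) • N s) s :=
    frenet_step hTD hND ha4D hb4D (fun s => by ring) (fun s => by ring)
  -- iterated derivatives of T agree with the chain on I
  have heq1 : Set.EqOn (deriv^[1] (deriv γ))
      (fun x => (0:ℝ) • deriv γ x + (ε₂*k x) • N x) I := by
    intro s hs
    simp only [Function.iterate_one]
    rw [hFr1 s hs, zero_smul, zero_add]
  have heq2 : Set.EqOn (deriv^[2] (deriv γ))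
      (fun x => (-(ε₁*ε₂)*(k x)^2) • deriv γ x + (ε₂*K1 x) • N x) I :=
    iterate_deriv_step hIopen heq1 hE1D
  have heq3 : Set.EqOn (deriv^[3] (deriv γ))
      (fun x => (-(3*(ε₁*ε₂))*(k x*K1 x)) • deriv γ x
        + (ε₂*K2 x - (ε₁*ε₂*ε₂)*(k x)^3) • N x) I :=
    iterate_deriv_step hIopen heq2 hE2D
  have heq4 : Set.EqOn (deriv^[4] (deriv γ))
      (fun x => ((ε₁*ε₁*ε₂*ε₂)*(k x)^4 - (ε₁*ε₂)*(3*(K1 x)^2 + 4*(k x*K2 x))) • deriv γ x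
        + (ε₂*K3 x - (6*(ε₁*ε₂*ε₂))*((k x)^2*K1 x)) • N x) I :=
    iterate_deriv_step hIopen heq3 hE3D
  have heq5 : Set.EqOn (deriv^[5] (deriv γ))
      (fun x => ((10*(ε₁*ε₁*ε₂*ε₂))*((k x)^3*K1 x)
          - (ε₁*ε₂)*(10*(K1 x*K2 x) + 5*(k x*K3 x))) • deriv γ x
        + (ε₂*K4 x + (ε₁*ε₁*ε₂*ε₂*ε₂)*(k x)^5
          - (ε₁*ε₂*ε₂)*(15*(k x*(K1 x)^2) + 10*((k x)^2*K2 x))) • N x) I :=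
    iterate_deriv_step hIopen heq4 hE4D
  -- the sixth derivative vanishes, so the coefficient combination vanishes
  have hE5zero : ∀ s ∈ I,
      ((10*(ε₁*ε₁*ε₂*ε₂))*((k s)^3*K1 s)
          - (ε₁*ε₂)*(10*(K1 s*K2 s) + 5*(k s*K3 s))) • deriv γ s
        + (ε₂*K4 s + (ε₁*ε₁*ε₂*ε₂*ε₂)*(k s)^5
          - (ε₁*ε₂*ε₂)*(15*(k s*(K1 s)^2) + 10*((k s)^2*K2 s))) • N s = 0 := by
    intro s hs
    have h2 : iteratedDeriv 6 γ s = deriv^[5] (deriv γ) s := by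
      rw [iteratedDeriv_eq_iterate]
      have h3 : deriv^[6] γ = deriv^[5] (deriv γ) := Function.iterate_succ_apply deriv 5 γ
      rw [h3]
    have h0 := hcon s hs
    rw [h2, heq5 hs] at h0
    simpa using h0
  -- extract the two scalar Frenet coefficient equations
  have ha' : ∀ s ∈ I, 2*(k s)^3*K1 s = δ*(2*(K1 s*K2 s) + k s*K3 s) := by
    intro s hs
    have e1 : pform t (((10*(ε₁*ε₁*ε₂*ε₂))*((k s)^3*K1 s)
          - (ε₁*ε₂)*(10*(K1 s*K2 s) + 5*(k s*K3 s))) • deriv γ s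
        + (ε₂*K4 s + (ε₁*ε₁*ε₂*ε₂*ε₂)*(k s)^5
          - (ε₁*ε₂*ε₂)*(15*(k s*(K1 s)^2) + 10*((k s)^2*K2 s))) • N s) (deriv γ s) = 0 := by
      rw [hE5zero s hs, pform_zero_left]
    rw [pform_add_left, pform_smul_left, pform_smul_left, hunit s hs,
      pform_comm t (N s) (deriv γ s), hTN s hs] at e1
    rw [hδdef]
    rcases hε₁ with rfl | rfl <;> rcases hε₂ with rfl | rfl <;> linarith [e1]
  have hb' : ∀ s ∈ I, K4 s + (k s)^5
      = δ*(15*(k s*(K1 s)^2) + 10*((k s)^2*K2 s)) := by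
    intro s hs
    have e1 : pform t (((10*(ε₁*ε₁*ε₂*ε₂))*((k s)^3*K1 s)
          - (ε₁*ε₂)*(10*(K1 s*K2 s) + 5*(k s*K3 s))) • deriv γ s
        + (ε₂*K4 s + (ε₁*ε₁*ε₂*ε₂*ε₂)*(k s)^5
          - (ε₁*ε₂*ε₂)*(15*(k s*(K1 s)^2) + 10*((k s)^2*K2 s))) • N s) (N s) = 0 := by
      rw [hE5zero s hs, pform_zero_left]
    rw [pform_add_left, pform_smul_left, pform_smul_left, hNN s hs, hTN s hs] at e1
    rw [hδdef]
    rcases hε₁ with rfl | rfl <;> rcases hε₂ with rfl | rfl <;> linarith [e1]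
  -- first integral: F := k^4/2 - del*(k k2 + k1^2/2) is constant on I
  have hFD : ∀ s ∈ I, HasDerivAt
      (fun x => (1/2:ℝ)*(k x)^4 - δ*(k x*K2 x) - (δ/2)*(K1 x)^2) 0 s := by
    intro s hs
    have h := ((((hkD s hs).pow 4).const_mul (1/2:ℝ)).sub
      (((hkD s hs).mul (hk2D s hs)).const_mul δ)).sub
      (((hk1D s hs).pow 2).const_mul (δ/2))
    refine h.congr_deriv (Eq.symm ?_)
    push_cast [Pi.pow_apply]
    linear_combination -(ha' s hs)
  obtain ⟨s₀, hs₀⟩ := hIne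
  obtain ⟨c, hcdef⟩ : ∃ cc : ℝ,
      cc = (1/2:ℝ)*(k s₀)^4 - δ*(k s₀*K2 s₀) - (δ/2)*(K1 s₀)^2 := ⟨_, rfl⟩
  have h1 : ∀ s ∈ I, k s*K2 s = δ*((k s)^4/2) - δ*c - (K1 s)^2/2 := by
    intro s hs
    have h : (1/2:ℝ)*(k s)^4 - δ*(k s*K2 s) - (δ/2)*(K1 s)^2 = c := by
      rw [hcdef]
      exact const_of_hasDerivAt_zero hconv hFD hs hs₀
    linear_combination (-δ)*h - (k s*K2 s + (K1 s)^2/2)*hδsq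
  have h2 : ∀ s ∈ I, k s*K3 s = 2*δ*((k s)^3*K1 s) - 2*(K1 s*K2 s) := by
    intro s hs
    linear_combination (-δ)*(ha' s hs) - (k s*K3 s + 2*(K1 s*K2 s))*hδsq
  -- differentiate h2 to get an expression for k*K4
  have h3 : ∀ s ∈ I, k s*K4 s = 6*δ*((k s)^2*(K1 s)^2) + 2*δ*((k s)^3*K2 s)
      - 2*(K2 s)^2 - 3*(K1 s*K3 s) := by
    intro s hs
    have hPD : HasDerivAt
        (fun x => k x*K3 x - (2*δ*((k x)^3*K1 x) - 2*(K1 x*K2 x)))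
        ((K1 s*K3 s + k s*K4 s) - (2*δ*(3*((k s)^2*(K1 s)^2) + (k s)^3*K2 s)
          - 2*((K2 s)^2 + K1 s*K3 s))) s := by
      have h := ((hkD s hs).mul (hk3D s hs)).sub
        (((((hkD s hs).pow 3).mul (hk1D s hs)).const_mul (2*δ)).sub
          (((hk1D s hs).mul (hk2D s hs)).const_mul 2))
      refine h.congr_deriv (Eq.symm ?_)
      push_cast [Pi.pow_apply]
      ring
    have hz := deriv_eq_zero_of_eqOn_zero hIopen hs hPD
      (fun x hx => by linear_combination h2 x hx)
    linear_combination hz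
  -- the key algebraic identity G on I
  have hG : ∀ x ∈ I, 7*(k x)^8 + (14*δ)*((k x)^4*(K1 x)^2) - (20*c)*(k x)^4
      + 4*c^2 + 7*(K1 x)^4 + (16*δ*c)*(K1 x)^2 = 0 := by
    intro x hx
    linear_combination (-2*(k x)^3)*(hb' x hx) + (2*(k x)^2)*(h3 x hx)
      + (-6*(k x*K1 x))*(h2 x hx)
      + (14*(K1 x)^2 - 4*(k x*K2 x) - 18*δ*(k x)^4 + 4*δ*c)*(h1 x hx)
      + (-9*(k x)^8 + 20*c*(k x)^4 - 4*c^2)*hδsq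
  -- derivative of G vanishes on I
  have hGd0 : ∀ s ∈ I, 56*((k s)^7*K1 s) + 56*δ*((k s)^3*(K1 s)^3)
      + 28*δ*((k s)^4*(K1 s*K2 s)) - 80*c*((k s)^3*K1 s)
      + 28*((K1 s)^3*K2 s) + 32*δ*c*(K1 s*K2 s) = 0 := by
    intro s hs
    have hGD : HasDerivAt
        (fun x => 7*(k x)^8 + (14*δ)*((k x)^4*(K1 x)^2) - (20*c)*(k x)^4
          + 4*c^2 + 7*(K1 x)^4 + (16*δ*c)*(K1 x)^2)
        (56*((k s)^7*K1 s) + 56*δ*((k s)^3*(K1 s)^3)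
          + 28*δ*((k s)^4*(K1 s*K2 s)) - 80*c*((k s)^3*K1 s)
          + 28*((K1 s)^3*K2 s) + 32*δ*c*(K1 s*K2 s)) s := by
      have h := (((((((hkD s hs).pow 8).const_mul 7).add
        ((((hkD s hs).pow 4).mul ((hk1D s hs).pow 2)).const_mul (14*δ))).sub
        (((hkD s hs).pow 4).const_mul (20*c))).add_const (4*c^2)).add
        (((hk1D s hs).pow 4).const_mul 7)).add
        (((hk1D s hs).pow 2).const_mul (16*δ*c))
      refine h.congr_deriv (Eq.symm ?_)
      push_cast [Pi.pow_apply]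
      ring
    exact deriv_eq_zero_of_eqOn_zero hIopen hs hGD hG
  -- case split on whether K1 vanishes identically on I
  by_cases hflat : ∀ x ∈ I, K1 x = 0
  · -- flat case: k is constant, then k^5 = 0, contradiction
    have hK2z : ∀ x ∈ I, K2 x = 0 := by
      intro x hx
      have hev : K1 =ᶠ[nhds x] fun _ => (0:ℝ) :=
        Filter.eventuallyEq_of_mem (hIopen.mem_nhds hx) hflat
      rw [hK2def, hev.deriv_eq, deriv_const]
    have hK3z : ∀ x ∈ I, K3 x = 0 := by
      intro x hx
      have hev : K2 =ᶠ[nhds x] fun _ => (0:ℝ) :=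
        Filter.eventuallyEq_of_mem (hIopen.mem_nhds hx) hK2z
      rw [hK3def, hev.deriv_eq, deriv_const]
    have hK4z : ∀ x ∈ I, K4 x = 0 := by
      intro x hx
      have hev : K3 =ᶠ[nhds x] fun _ => (0:ℝ) :=
        Filter.eventuallyEq_of_mem (hIopen.mem_nhds hx) hK3z
      rw [hK4def, hev.deriv_eq, deriv_const]
    have hb0 := hb' s₀ hs₀
    rw [hK4z s₀ hs₀, hflat s₀ hs₀, hK2z s₀ hs₀] at hb0
    have hk5 : 0 < (k s₀)^5 := pow_pos (hkpos s₀ hs₀) 5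
    nlinarith [hb0, hk5]
  · -- there is a point where K1 is nonzero
    push_neg at hflat
    obtain ⟨s₁, hs₁I, hs₁⟩ := hflat
    have hK1cont : ContinuousOn K1 I := hk1c.continuousOn
    have hJopen : IsOpen (I ∩ K1 ⁻¹' {(0:ℝ)}ᶜ) :=
      hK1cont.isOpen_inter_preimage hIopen isOpen_compl_singleton
    set J := I ∩ K1 ⁻¹' {(0:ℝ)}ᶜ with hJdef
    have hs₁J : s₁ ∈ J := ⟨hs₁I, by simpa using hs₁⟩
    have hJsub : J ⊆ I := Set.inter_subset_left
    have hJk1 : ∀ x ∈ J, K1 x ≠ 0 := fun x hx => by simpa using hx.2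
    -- divide the derivative of G by K1 on J
    have hH : ∀ x ∈ J, 56*(k x)^7 + 56*δ*((k x)^3*(K1 x)^2) + 28*δ*((k x)^4*K2 x)
        - 80*c*(k x)^3 + 28*((K1 x)^2*K2 x) + 32*δ*c*K2 x = 0 := by
      intro x hx
      have h := hGd0 x (hJsub hx)
      have hfac : K1 x * (56*(k x)^7 + 56*δ*((k x)^3*(K1 x)^2) + 28*δ*((k x)^4*K2 x)
          - 80*c*(k x)^3 + 28*((K1 x)^2*K2 x) + 32*δ*c*K2 x) = 0 := by
        linear_combination h
      exact (mul_eq_zero.mp hfac).resolve_left (hJk1 x hx)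
    -- second identity G2 on J
    have hG2 : ∀ x ∈ J, 7*(k x)^8 + (7*δ)*((k x)^4*(K1 x)^2) - (11*c)*(k x)^4
        - (δ*c)*(K1 x)^2 - 2*c^2 = 0 := by
      intro x hx
      linear_combination ((k x)/12)*(hH x hx) + (1/6)*(hG x (hJsub hx))
        + (-(7/3)*(K1 x)^2 - (7/3)*δ*(k x)^4 - (8/3)*δ*c)*(h1 x (hJsub hx))
        + (-(7/6)*(k x)^8 + c*(k x)^4 + (8/3)*c^2)*hδsq
    -- derivative of G2 vanishes on J
    have hG2d0 : ∀ s ∈ J, 56*((k s)^7*K1 s) + 28*δ*((k s)^3*(K1 s)^3)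
        + 14*δ*((k s)^4*(K1 s*K2 s)) - 44*c*((k s)^3*K1 s) - 2*δ*c*(K1 s*K2 s) = 0 := by
      intro s hs
      have hG2D : HasDerivAt
          (fun x => 7*(k x)^8 + (7*δ)*((k x)^4*(K1 x)^2) - (11*c)*(k x)^4
            - (δ*c)*(K1 x)^2 - 2*c^2)
          (56*((k s)^7*K1 s) + 28*δ*((k s)^3*(K1 s)^3)
            + 14*δ*((k s)^4*(K1 s*K2 s)) - 44*c*((k s)^3*K1 s) - 2*δ*c*(K1 s*K2 s)) s := by
        have h := ((((((hkD s (hJsub hs)).pow 8).const_mul 7).add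
          ((((hkD s (hJsub hs)).pow 4).mul ((hk1D s (hJsub hs)).pow 2)).const_mul (7*δ))).sub
          (((hkD s (hJsub hs)).pow 4).const_mul (11*c))).sub
          (((hk1D s (hJsub hs)).pow 2).const_mul (δ*c))).sub_const (2*c^2)
        refine h.congr_deriv (Eq.symm ?_)
        push_cast [Pi.pow_apply]
        ring
      exact deriv_eq_zero_of_eqOn_zero hJopen hs hG2D hG2
    have hH2 : ∀ x ∈ J, 56*(k x)^7 + 28*δ*((k x)^3*(K1 x)^2) + 14*δ*((k x)^4*K2 x)
        - 44*c*(k x)^3 - 2*δ*c*K2 x = 0 := by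
      intro x hx
      have h := hG2d0 x hx
      have hfac : K1 x * (56*(k x)^7 + 28*δ*((k x)^3*(K1 x)^2) + 14*δ*((k x)^4*K2 x)
          - 44*c*(k x)^3 - 2*δ*c*K2 x) = 0 := by
        linear_combination h
      exact (mul_eq_zero.mp hfac).resolve_left (hJk1 x hx)
    -- third identity L on J
    have hL : ∀ x ∈ J, 21*(k x)^8 - (13*c)*(k x)^4 + 4*c^2 + (2*δ*c)*(K1 x)^2 = 0 := by
      intro x hx
      linear_combination ((k x)/2)*(hH2 x hx) + (-(3/2))*(hG2 x hx)
        + (-7*δ*(k x)^4 + δ*c)*(h1 x (hJsub hx))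
        + (-(7/2)*(k x)^8 + (15/2)*c*(k x)^4 - c^2)*hδsq
    -- derivative of L vanishes on J
    have hLd0 : ∀ s ∈ J, 168*((k s)^7*K1 s) - 52*c*((k s)^3*K1 s)
        + 4*δ*c*(K1 s*K2 s) = 0 := by
      intro s hs
      have hLD : HasDerivAt
          (fun x => 21*(k x)^8 - (13*c)*(k x)^4 + 4*c^2 + (2*δ*c)*(K1 x)^2)
          (168*((k s)^7*K1 s) - 52*c*((k s)^3*K1 s) + 4*δ*c*(K1 s*K2 s)) s := by
        have h := (((((hkD s (hJsub hs)).pow 8).const_mul 21).sub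
          (((hkD s (hJsub hs)).pow 4).const_mul (13*c))).add_const (4*c^2)).add
          (((hk1D s (hJsub hs)).pow 2).const_mul (2*δ*c))
        refine h.congr_deriv (Eq.symm ?_)
        push_cast [Pi.pow_apply]
        ring
      exact deriv_eq_zero_of_eqOn_zero hJopen hs hLD hL
    have hH3 : ∀ x ∈ J, 168*(k x)^7 - 52*c*(k x)^3 + 4*δ*c*K2 x = 0 := by
      intro x hx
      have h := hLd0 x hx
      have hfac : K1 x * (168*(k x)^7 - 52*c*(k x)^3 + 4*δ*c*K2 x) = 0 := by
        linear_combination h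
      exact (mul_eq_zero.mp hfac).resolve_left (hJk1 x hx)
    -- conclude 3 k^4 = c on J
    have hc3 : ∀ x ∈ J, 3*(k x)^4 - c = 0 := by
      intro x hx
      have hNfin : 189*(k x)^8 - 63*c*(k x)^4 = 0 := by
        linear_combination (k x)*(hH3 x hx) + (hL x hx) + (-4*δ*c)*(h1 x (hJsub hx))
          + (-2*c*(k x)^4 + 4*c^2)*hδsq
      have hfac : 63*(k x)^4*(3*(k x)^4 - c) = 0 := by linear_combination hNfin
      rcases mul_eq_zero.mp hfac with h' | h'
      · exfalso
        have := pow_pos (hkpos x (hJsub hx)) 4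
        nlinarith
      · exact h'
    -- differentiate 3 k^4 - c = 0 at s₁ to get K1 s₁ = 0, contradiction
    have hCD : HasDerivAt (fun x => 3*(k x)^4 - c) (12*((k s₁)^3*K1 s₁)) s₁ := by
      have h := (((hkD s₁ hs₁I).pow 4).const_mul 3).sub_const c
      refine h.congr_deriv (Eq.symm ?_)
      push_cast [Pi.pow_apply]
      ring
    have hfin := deriv_eq_zero_of_eqOn_zero hJopen hs₁J hCD hc3
    have h12 : (k s₁)^3 * K1 s₁ = 0 := by linarith
    rcases mul_eq_zero.mp h12 with h' | h'
    · have := pow_pos (hkpos s₁ hs₁I) 3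
      nlinarith
    · exact hs₁ h'
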